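/- For every c > 0, every ū₀ ∈ [0,1] and every u₁ ≥ 0, the function u₂ ↦ −(u₂ μ̄(u₁,u₂) − u₁(1 − μ̄(u₁,u₂))) − (u₂+1)/(u₁+1) + (c/2)u₂², where μ̄(u₁,u₂) = (u₁ − u₂ + 1 + ū₀)/3, is strictly convex on ℝ (its second derivative equals 2/3 + c > 0), and its unique minimizer over [0,∞) is u₂* = (u₁ + ū₀u₁ + ū₀ + 4)/(3cu₁ + 3c + 2u₁ + 2), which is strictly positive. -/
import Mathlib


/-- Anticipated cost of major player 2 in the Multi-Leader-Follower setting,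
where the consumers' mean field response is `μ̄(u₁,u₂) = (u₁ - u₂ + 1 + ū₀)/3`. -/
noncomputable def K2 (c ubar₀ u₁ u₂ : ℝ) : ℝ :=
  -(u₂ * ((u₁ - u₂ + 1 + ubar₀) / 3) - u₁ * (1 - (u₁ - u₂ + 1 + ubar₀) / 3)) -
    (u₂ + 1) / (u₁ + 1) + c / 2 * u₂ ^ 2

theorem stmt_15 (c ubar₀ u₁ : ℝ) (hc : 0 < c) (h₀ : ubar₀ ∈ Set.Icc (0 : ℝ) 1)
    (hu₁ : 0 ≤ u₁) :
    StrictConvexOn ℝ Set.univ (K2 c ubar₀ u₁) ∧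
    (∀ x : ℝ, deriv (deriv (K2 c ubar₀ u₁)) x = 2 / 3 + c) ∧
    0 < (u₁ + ubar₀ * u₁ + ubar₀ + 4) / (3 * c * u₁ + 3 * c + 2 * u₁ + 2) ∧
    ∀ u₂ : ℝ, 0 ≤ u₂ →
      u₂ ≠ (u₁ + ubar₀ * u₁ + ubar₀ + 4) / (3 * c * u₁ + 3 * c + 2 * u₁ + 2) →
      K2 c ubar₀ u₁ ((u₁ + ubar₀ * u₁ + ubar₀ + 4) / (3 * c * u₁ + 3 * c + 2 * u₁ + 2))
        < K2 c ubar₀ u₁ u₂ := by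
  obtain ⟨h0, h1⟩ := h₀
  have hu1 : (0:ℝ) < u₁ + 1 := by linarith
  have hu1' : u₁ + 1 ≠ 0 := ne_of_gt hu1
  set a : ℝ := 1/3 + c/2 with ha
  set b : ℝ := -(1 + ubar₀)/3 - 1/(u₁ + 1) with hb
  set d : ℝ := u₁ - u₁ * (u₁ + 1 + ubar₀)/3 - 1/(u₁ + 1) with hd
  have ha0 : 0 < a := by rw [ha]; linarith
  have hfun : K2 c ubar₀ u₁ = fun x => a * x ^ 2 + b * x + d := by
    funext x
    unfold K2
    rw [ha, hb, hd]
    field_simp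
    ring
  have hD : (0:ℝ) < 3 * c * u₁ + 3 * c + 2 * u₁ + 2 := by nlinarith
  have hN : (0:ℝ) < u₁ + ubar₀ * u₁ + ubar₀ + 4 := by nlinarith
  set m : ℝ := (u₁ + ubar₀ * u₁ + ubar₀ + 4) / (3 * c * u₁ + 3 * c + 2 * u₁ + 2) with hm
  have hderiv : deriv (K2 c ubar₀ u₁) = fun x => 2 * a * x + b := by
    funext x
    rw [hfun]
    have h1 : HasDerivAt (fun x : ℝ => a * x ^ 2 + b * x + d) (2 * a * x + b) x := by
      have := (((hasDerivAt_pow 2 x).const_mul a).add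
        ((hasDerivAt_id x).const_mul b)).add_const d
      simpa [mul_comm, mul_assoc, mul_left_comm] using this
    exact h1.deriv
  have hderiv2 : ∀ x : ℝ, deriv (deriv (K2 c ubar₀ u₁)) x = 2/3 + c := by
    intro x
    rw [hderiv]
    have h1 : HasDerivAt (fun x : ℝ => 2 * a * x + b) (2 * a) x := by
      simpa using ((hasDerivAt_id x).const_mul (2 * a)).add_const b
    rw [h1.deriv, ha]; ring
  refine ⟨?_, hderiv2, by positivity, ?_⟩
  · apply strictConvexOn_of_deriv2_pos convex_univ
    · rw [hfun]; exact (by continuity : Continuous fun x : ℝ => a * x ^ 2 + b * x + d).continuousOn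
    · intro x _
      show 0 < id (deriv (deriv (K2 c ubar₀ u₁))) x
      rw [id_eq, hderiv2 x]; linarith
  · intro x hx hne
    have key : K2 c ubar₀ u₁ x - K2 c ubar₀ u₁ m = a * (x - m) ^ 2 := by
      rw [hfun, hm, ha, hb]
      field_simp
      ring
    have hsq : 0 < (x - m) ^ 2 := by
      have : x - m ≠ 0 := sub_ne_zero.mpr hne
      positivity
    nlinarith
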